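/- arXiv:2101.04914 — 5 statements merged into one kernel-verified Lean document; each statement's English description precedes it below -/
import Mathlib

section
/- Let the family (X_{i,j})_{1 ≤ i < j ≤ n} be suffix-determined and satisfy the averaging property. Then for every m ∈ {1,…,n−1}, every choice of distinct elements t_{m+1},…,t_n of S, and the event A = {π⁻¹(k) = t_k for all k ∈ {m+1,…,n}} (which has positive probability), one has E[2^{C_1 + C_2 + ⋯ + C_m} | A] ≤ exp(E[C_1 + C_2 + ⋯ + C_m | A]). -/
/-!
Induction on `m`, for all suffixes `t` at once. Splitting the event `A` that fixes the priorities
`m + 1, …, n` according to the element `s` of priority `m` gives the events that fix the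
priorities `m, …, n`. On such a fiber `C m` is a constant `c ≥ 0` (suffix-determinedness), so by
induction `E[2^(C 1 + ⋯ + C m)] = 2^c E[2^(C 1 + ⋯ + C (m-1))] ≤ 2^c exp E[C 1 + ⋯ + C (m-1)]
≤ exp E[C 1 + ⋯ + C m]`, as `2^c ≤ e^c`. By the averaging property the last bound is the same on
every fiber, and averaging the fiberwise bounds over `A` gives the bound on `A`.
-/

open scoped Classical BigOperators

/-- Conditional expectation of `f` given the event `A`, for the uniform
distribution on a finite type: the average of `f` over the elements satisfying `A`. -/
noncomputable def cexp {α : Type} [Fintype α] (A : α → Prop) (f : α → ℝ) : ℝ :=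
  (∑ x ∈ Finset.univ.filter A, f x) / ((Finset.univ.filter A).card : ℝ)

open Finset

section cexp

variable {α : Type} [Fintype α] {A B : α → Prop} {f g : α → ℝ}

theorem cexp_congr_event (h : ∀ x, A x ↔ B x) (f : α → ℝ) : cexp A f = cexp B f := by
  simp only [cexp, h]

theorem cexp_congr_fun (h : ∀ x, A x → f x = g x) : cexp A f = cexp A g := by
  unfold cexp
  rw [sum_congr rfl fun x hx => h x (mem_filter.mp hx).2]

theorem cexp_eq_zero_of_forall_not (h : ∀ x, ¬ A x) : cexp A f = 0 := by
  simp [cexp, h]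

theorem card_mul_cexp (A : α → Prop) [DecidablePred A] (f : α → ℝ) :
    #(univ.filter A) * cexp A f = ∑ x ∈ univ.filter A, f x := by
  -- `cexp` filters with the classical instance
  obtain rfl : ‹DecidablePred A› = fun x => Classical.propDecidable (A x) := Subsingleton.elim _ _
  rcases (univ.filter A).eq_empty_or_nonempty with h | h
  · simp [h]
  · exact mul_div_cancel₀ _ (by simpa using h.ne_empty)

theorem cexp_mul_const (A : α → Prop) (f : α → ℝ) (c : ℝ) :
    cexp A (fun x => f x * c) = cexp A f * c := by
  simp only [cexp, ← sum_mul, div_mul_eq_mul_div]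

theorem cexp_add_const (hA : ∃ x, A x) (f : α → ℝ) (c : ℝ) :
    cexp A (fun x => f x + c) = cexp A f + c := by
  obtain ⟨x, hx⟩ := hA
  have hcard : (#(univ.filter A) : ℝ) ≠ 0 := by
    exact_mod_cast (card_pos.mpr ⟨x, by simpa using hx⟩).ne'
  simp only [cexp, sum_add_distrib, sum_const, nsmul_eq_mul]
  field_simp

theorem card_mul_cexp_eq_sum_fiber {ι : Type} (A : α → Prop) (key : α → ι) (f : α → ℝ) :
    #(univ.filter A) * cexp A f = ∑ i ∈ (univ.filter A).image key,
      #(univ.filter fun x => A x ∧ key x = i) * cexp (fun x => A x ∧ key x = i) f := by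
  rw [card_mul_cexp, ← sum_fiberwise_of_maps_to fun x hx => mem_image_of_mem key hx]
  refine sum_congr rfl fun i _ => ?_
  rw [filter_filter, card_mul_cexp]

theorem card_eq_sum_card_fiber {ι : Type} (A : α → Prop) (key : α → ι) :
    #(univ.filter A)
      = ∑ i ∈ (univ.filter A).image key, #(univ.filter fun x => A x ∧ key x = i) := by
  rw [card_eq_sum_card_fiberwise fun x hx => mem_image_of_mem key hx]
  simp only [filter_filter]

theorem cexp_le_of_forall_fiber_le {ι : Type} (key : α → ι) {b : ℝ} (hA : ∃ x, A x)
    (h : ∀ x, A x → cexp (fun y => A y ∧ key y = key x) f ≤ b) : cexp A f ≤ b := by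
  obtain ⟨x, hx⟩ := hA
  have hcard : (0 : ℝ) < #(univ.filter A) := by
    exact_mod_cast card_pos.mpr ⟨x, by simpa using hx⟩
  refine le_of_mul_le_mul_left ?_ hcard
  rw [card_mul_cexp_eq_sum_fiber A key, card_eq_sum_card_fiber A key, Nat.cast_sum, sum_mul]
  refine sum_le_sum fun i hi => mul_le_mul_of_nonneg_left ?_ (Nat.cast_nonneg _)
  obtain ⟨y, hy, rfl⟩ := mem_image.mp hi
  exact h y (mem_filter.mp hy).2

theorem cexp_eq_of_forall_fiber_eq {ι : Type} (key : α → ι) {μ : ℝ} (hA : ∃ x, A x)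
    (h : ∀ x, A x → cexp (fun y => A y ∧ key y = key x) f = μ) : cexp A f = μ := by
  obtain ⟨x, hx⟩ := hA
  have hcard : (#(univ.filter A) : ℝ) ≠ 0 := by
    exact_mod_cast (card_pos.mpr ⟨x, by simpa using hx⟩).ne'
  refine mul_left_cancel₀ hcard ?_
  rw [card_mul_cexp_eq_sum_fiber A key, card_eq_sum_card_fiber A key, Nat.cast_sum, sum_mul]
  refine sum_congr rfl fun i hi => ?_
  obtain ⟨y, hy, rfl⟩ := mem_image.mp hi
  rw [h y (mem_filter.mp hy).2]

theorem two_rpow_le_exp {c : ℝ} (hc : 0 ≤ c) : (2 : ℝ) ^ c ≤ Real.exp c := by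
  rw [Real.rpow_def_of_pos two_pos]
  exact Real.exp_le_exp.mpr (mul_le_of_le_one_left hc (Real.log_two_lt_d9.le.trans (by norm_num)))

theorem cexp_two_rpow_add_const_le {c : ℝ} (hc : 0 ≤ c)
    (hg : cexp B (fun x => 2 ^ g x) ≤ Real.exp (cexp B g)) :
    cexp B (fun x => 2 ^ (g x + c)) ≤ Real.exp (cexp B fun x => g x + c) := by
  by_cases hB : ∃ x, B x
  · simp only [Real.rpow_add two_pos, cexp_mul_const, cexp_add_const hB, Real.exp_add]
    exact mul_le_mul hg (two_rpow_le_exp hc) (by positivity) (Real.exp_pos _).le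
  · rw [cexp_eq_zero_of_forall_not (not_exists.mp hB)]
    exact (Real.exp_pos _).le

end cexp

section Priority

variable {S : Type} {n : ℕ}

/-- Priorities are `π s + 1`: `π` gives priority `k` to `t k` for every `m < k ≤ n`. -/
def HasSuffix (t : ℕ → S) (m : ℕ) (π : S ≃ Fin n) : Prop :=
  ∀ k, m + 1 ≤ k → k ≤ n → (π (t k) : ℕ) + 1 = k

def SuffixDetermined (i : ℕ) (f : (S ≃ Fin n) → ℝ) : Prop :=
  ∀ π π' : S ≃ Fin n, (∀ k : Fin n, i ≤ (k : ℕ) + 1 → π.symm k = π'.symm k) → f π = f π'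

theorem SuffixDetermined.sum {i : ℕ} {J : Finset ℕ} {f : ℕ → (S ≃ Fin n) → ℝ}
    (hf : ∀ j ∈ J, SuffixDetermined i (f j)) : SuffixDetermined i fun π => ∑ j ∈ J, f j π :=
  fun π π' h => sum_congr rfl fun j hj => hf j hj π π' h

variable {t : ℕ → S} {m : ℕ} {π π' : S ≃ Fin n}

theorem HasSuffix.symm_apply (h : HasSuffix t m π) (k : Fin n) (hk : m ≤ k) :
    π.symm k = t (k + 1) := by
  rw [Equiv.symm_apply_eq]
  exact Fin.ext (by have := h (k + 1) (by omega) k.isLt; omega)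

theorem SuffixDetermined.eq_of_hasSuffix {f : (S ≃ Fin n) → ℝ} (hf : SuffixDetermined (m + 1) f)
    (h : HasSuffix t m π) (h' : HasSuffix t m π') : f π = f π' :=
  hf π π' fun k hk => by rw [h.symm_apply k (by omega), h'.symm_apply k (by omega)]

theorem HasSuffix.notMem_image {s : S} (h : HasSuffix t m π) (hs : (π s : ℕ) < m) :
    s ∉ t '' Set.Icc (m + 1) n := by
  rintro ⟨k, ⟨hk, hkn⟩, rfl⟩
  have := h k hk hkn
  omega

theorem hasSuffix_update_iff {s : S} (hm : m < n) :
    HasSuffix (Function.update t (m + 1) s) m π ↔ HasSuffix t (m + 1) π ∧ π.symm ⟨m, hm⟩ = s := by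
  rw [Equiv.symm_apply_eq, eq_comm, Fin.ext_iff]
  constructor
  · intro h
    refine ⟨fun k hk hkn => ?_, ?_⟩
    · simpa [Function.update_of_ne (by omega : k ≠ m + 1)] using h k (by omega) hkn
    · simpa using h (m + 1) le_rfl hm
  · rintro ⟨h, hs⟩ k hk hkn
    rcases eq_or_lt_of_le hk with rfl | hk
    · simpa using hs
    · simpa [Function.update_of_ne hk.ne'] using h k hk hkn

theorem injOn_update {s : S} (hmn : m + 1 ≤ n) (ht : Set.InjOn t (Set.Icc (m + 1 + 1) n))
    (hs : s ∉ t '' Set.Icc (m + 1 + 1) n) :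
    Set.InjOn (Function.update t (m + 1) s) (Set.Icc (m + 1) n) := by
  have heq : Set.EqOn t (Function.update t (m + 1) s) (Set.Icc (m + 1 + 1) n) := fun k hk =>
    (Function.update_of_ne (by simp only [Set.mem_Icc] at hk; omega) _ _).symm
  rw [← Set.insert_Icc_add_one_left_eq_Icc hmn, Set.injOn_insert (by simp)]
  refine ⟨ht.congr heq, ?_⟩
  rwa [← heq.image_eq, Function.update_self]

end Priority

section Averaging

variable {S : Type} [Fintype S] [DecidableEq S] {n : ℕ} {C : ℕ → (S ≃ Fin n) → ℝ}

theorem cexp_two_rpow_sum_succ_le {t : ℕ → S} {m : ℕ} {π₁ : S ≃ Fin n}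
    (hC_nonneg : ∀ π, 0 ≤ C (m + 1) π) (hC_det : SuffixDetermined (m + 1) (C (m + 1)))
    (hπ₁ : HasSuffix t m π₁)
    (ih : cexp (HasSuffix t m) (fun π => (2 : ℝ) ^ ∑ i ∈ Icc 1 m, C i π)
      ≤ Real.exp (cexp (HasSuffix t m) fun π => ∑ i ∈ Icc 1 m, C i π)) :
    cexp (HasSuffix t m) (fun π => (2 : ℝ) ^ ∑ i ∈ Icc 1 (m + 1), C i π)
      ≤ Real.exp (cexp (HasSuffix t m) fun π => ∑ i ∈ Icc 1 (m + 1), C i π) := by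
  have hsplit : ∀ π, HasSuffix t m π →
      ∑ i ∈ Icc 1 (m + 1), C i π = ∑ i ∈ Icc 1 m, C i π + C (m + 1) π₁ := fun π hπ => by
    rw [sum_Icc_succ_top (by omega), hC_det.eq_of_hasSuffix hπ hπ₁]
  rw [cexp_congr_fun fun π hπ => congrArg (fun x => (2 : ℝ) ^ x) (hsplit π hπ),
    cexp_congr_fun hsplit]
  exact cexp_two_rpow_add_const_le (hC_nonneg π₁) ih

theorem cexp_two_rpow_sum_le_exp_cexp_succ {m : ℕ} (hmn : m + 1 < n)
    (hC_nonneg : ∀ π, 0 ≤ C (m + 1) π) (hC_det : SuffixDetermined (m + 1) (C (m + 1)))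
    {t : ℕ → S} (ht : Set.InjOn t (Set.Icc (m + 1 + 1) n))
    (havg : ∀ a b : S, a ∉ t '' Set.Icc (m + 1 + 1) n → b ∉ t '' Set.Icc (m + 1 + 1) n →
      cexp (fun π => (π a : ℕ) + 1 = m + 1 ∧ HasSuffix t (m + 1) π)
          (fun π => ∑ i ∈ Icc 1 (m + 1), C i π)
        = cexp (fun π => (π b : ℕ) + 1 = m + 1 ∧ HasSuffix t (m + 1) π)
          (fun π => ∑ i ∈ Icc 1 (m + 1), C i π))
    (ih : ∀ t' : ℕ → S, Set.InjOn t' (Set.Icc (m + 1) n) →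
      cexp (HasSuffix t' m) (fun π => (2 : ℝ) ^ ∑ i ∈ Icc 1 m, C i π)
        ≤ Real.exp (cexp (HasSuffix t' m) fun π => ∑ i ∈ Icc 1 m, C i π)) :
    cexp (HasSuffix t (m + 1)) (fun π => (2 : ℝ) ^ ∑ i ∈ Icc 1 (m + 1), C i π)
      ≤ Real.exp (cexp (HasSuffix t (m + 1)) fun π => ∑ i ∈ Icc 1 (m + 1), C i π) := by
  by_cases hA : ∃ π : S ≃ Fin n, HasSuffix t (m + 1) π
  swap
  · rw [cexp_eq_zero_of_forall_not (not_exists.mp hA)]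
    exact (Real.exp_pos _).le
  obtain ⟨π₀, hπ₀⟩ := hA
  -- the element of priority `m + 1`
  let key : (S ≃ Fin n) → S := fun π => π.symm ⟨m, by omega⟩
  have hkey_notMem : ∀ π₁, HasSuffix t (m + 1) π₁ → key π₁ ∉ t '' Set.Icc (m + 1 + 1) n :=
    fun π₁ h => h.notMem_image (by simp [key])
  have hfiber_avg : ∀ π₁, HasSuffix t (m + 1) π₁ →
      cexp (fun π => HasSuffix t (m + 1) π ∧ key π = key π₁)
          (fun π => ∑ i ∈ Icc 1 (m + 1), C i π)
        = cexp (fun π => HasSuffix t (m + 1) π ∧ key π = key π₀)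
          (fun π => ∑ i ∈ Icc 1 (m + 1), C i π) := fun π₁ h => by
    have hiff : ∀ s π, (π s : ℕ) + 1 = m + 1 ∧ HasSuffix t (m + 1) π
        ↔ HasSuffix t (m + 1) π ∧ key π = s := fun s π => by
      simp only [key, Equiv.symm_apply_eq, Fin.ext_iff, Nat.add_right_cancel_iff]
      exact and_comm.trans (and_congr_right' eq_comm)
    simpa only [cexp_congr_event (hiff _)] using
      havg _ _ (hkey_notMem π₁ h) (hkey_notMem π₀ hπ₀)
  have hfiber_le : ∀ π₁, HasSuffix t (m + 1) π₁ →
      cexp (fun π => HasSuffix t (m + 1) π ∧ key π = key π₁)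
          (fun π => (2 : ℝ) ^ ∑ i ∈ Icc 1 (m + 1), C i π)
        ≤ Real.exp (cexp (fun π => HasSuffix t (m + 1) π ∧ key π = key π₁)
          (fun π => ∑ i ∈ Icc 1 (m + 1), C i π)) := fun π₁ h => by
    have hiff : ∀ π, HasSuffix t (m + 1) π ∧ key π = key π₁
        ↔ HasSuffix (Function.update t (m + 1) (key π₁)) m π :=
      fun π => (hasSuffix_update_iff (by omega)).symm
    rw [cexp_congr_event hiff, cexp_congr_event hiff]
    exact cexp_two_rpow_sum_succ_le hC_nonneg hC_det ((hiff π₁).mp ⟨h, rfl⟩)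
      (ih _ (injOn_update hmn.le ht (hkey_notMem π₁ h)))
  calc _ ≤ Real.exp (cexp (fun π => HasSuffix t (m + 1) π ∧ key π = key π₀)
          (fun π => ∑ i ∈ Icc 1 (m + 1), C i π)) :=
        cexp_le_of_forall_fiber_le key ⟨π₀, hπ₀⟩ fun π₁ h =>
          (hfiber_le π₁ h).trans_eq (congrArg _ (hfiber_avg π₁ h))
    _ = _ := by rw [cexp_eq_of_forall_fiber_eq key ⟨π₀, hπ₀⟩ hfiber_avg]

theorem cexp_two_rpow_sum_le_exp_cexp
    (hC_nonneg : ∀ i, 1 ≤ i → i < n → ∀ π, 0 ≤ C i π)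
    (hC_det : ∀ i, 1 ≤ i → i < n → SuffixDetermined i (C i))
    (havg : ∀ m, 1 ≤ m → m < n → ∀ t : ℕ → S, Set.InjOn t (Set.Icc (m + 1) n) →
      ∀ a b : S, a ∉ t '' Set.Icc (m + 1) n → b ∉ t '' Set.Icc (m + 1) n →
        cexp (fun π => (π a : ℕ) + 1 = m ∧ HasSuffix t m π) (fun π => ∑ i ∈ Icc 1 m, C i π)
          = cexp (fun π => (π b : ℕ) + 1 = m ∧ HasSuffix t m π)
              (fun π => ∑ i ∈ Icc 1 m, C i π))
    (m : ℕ) (hm : m ≤ n - 1) (t : ℕ → S) (ht : Set.InjOn t (Set.Icc (m + 1) n)) :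
    cexp (HasSuffix t m) (fun π => (2 : ℝ) ^ ∑ i ∈ Icc 1 m, C i π)
      ≤ Real.exp (cexp (HasSuffix t m) fun π => ∑ i ∈ Icc 1 m, C i π) := by
  induction m generalizing t with
  | zero => simp [cexp, div_self_le_one]
  | succ m ih =>
    have hmn : m + 1 < n := by omega
    exact cexp_two_rpow_sum_le_exp_cexp_succ hmn (hC_nonneg _ le_add_self hmn)
      (hC_det _ le_add_self hmn) ht (havg _ le_add_self hmn t ht)
      fun t' ht' => ih (by omega) t' ht'

end Averaging

theorem stmt0_general
    {S : Type} [Fintype S] [DecidableEq S] (n : ℕ)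
    (X : ℕ → ℕ → (S ≃ Fin n) → ℝ)
    (hX01 : ∀ i j π, 1 ≤ i → i < j → j ≤ n → X i j π = 0 ∨ X i j π = 1)
    -- suffix-determined: `X i j` depends only on the elements of priorities `i, …, n`
    (hsuffix : ∀ i j, 1 ≤ i → i < j → j ≤ n →
      ∀ π π' : S ≃ Fin n,
        (∀ k : Fin n, i ≤ (k : ℕ) + 1 → π.symm k = π'.symm k) →
        X i j π = X i j π')
    -- column sums
    (C : ℕ → (S ≃ Fin n) → ℝ)
    (hC : ∀ i π, C i π = ∑ j ∈ Finset.Icc (i + 1) n, X i j π)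
    -- averaging property
    (havg : ∀ m, 1 ≤ m → m ≤ n → ∀ t : ℕ → S,
      Set.InjOn t (Set.Icc (m + 1) n) →
      ∀ a b : S, a ∉ t '' Set.Icc (m + 1) n → b ∉ t '' Set.Icc (m + 1) n →
        cexp (fun π => (π a : ℕ) + 1 = m ∧
              ∀ k, m + 1 ≤ k → k ≤ n → (π (t k) : ℕ) + 1 = k)
            (fun π => ∑ i ∈ Finset.Icc 1 (min m (n - 1)), C i π)
          = cexp (fun π => (π b : ℕ) + 1 = m ∧
              ∀ k, m + 1 ≤ k → k ≤ n → (π (t k) : ℕ) + 1 = k)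
            (fun π => ∑ i ∈ Finset.Icc 1 (min m (n - 1)), C i π))
    (m : ℕ) (hm2 : m ≤ n - 1)
    (t : ℕ → S) (ht : Set.InjOn t (Set.Icc (m + 1) n)) :
    cexp (fun π => ∀ k, m + 1 ≤ k → k ≤ n → (π (t k) : ℕ) + 1 = k)
        (fun π => (2 : ℝ) ^ (∑ i ∈ Finset.Icc 1 m, C i π))
      ≤ Real.exp (cexp (fun π => ∀ k, m + 1 ≤ k → k ≤ n → (π (t k) : ℕ) + 1 = k)
          (fun π => ∑ i ∈ Finset.Icc 1 m, C i π)) := by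
  refine cexp_two_rpow_sum_le_exp_cexp (fun i hi _ π => ?_) (fun i hi _ => ?_)
    (fun m hm hmn => ?_) m hm2 t ht
  · rw [hC]
    refine sum_nonneg fun j hj => ?_
    rcases hX01 i j π hi (mem_Icc.mp hj).1 (mem_Icc.mp hj).2 with h | h <;> simp [h]
  · rw [show C i = _ from funext (hC i)]
    exact SuffixDetermined.sum fun j hj =>
      hsuffix i j hi (mem_Icc.mp hj).1 (mem_Icc.mp hj).2
  · intro t ht a b ha hb
    have := havg m hm hmn.le t ht a b ha hb
    rw [min_eq_left (Nat.le_sub_one_of_lt hmn)] at this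
    exact this

/-- for a suffix-determined family `(X i j)_{1 ≤ i < j ≤ n}` of
`{0,1}`-valued random variables on uniformly random bijections `π : S → {1,…,n}`
(encoded as `π : S ≃ Fin n`, the priority of `s` being `(π s : ℕ) + 1`)
satisfying the averaging property, for every `m ∈ {1,…,n−1}` and every choice of
distinct elements `t (m+1), …, t n` of `S`, with
`A = {π | π⁻¹(k) = t k for all k ∈ {m+1,…,n}}`, one has
`E[2^(C 1 + ⋯ + C m) | A] ≤ exp (E[C 1 + ⋯ + C m | A])`. -/
theorem stmt0
    {S : Type} [Fintype S] [DecidableEq S] (n : ℕ) (hn : 1 ≤ n)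
    (hcard : Fintype.card S = n)
    (X : ℕ → ℕ → (S ≃ Fin n) → ℝ)
    (hX01 : ∀ i j π, 1 ≤ i → i < j → j ≤ n → X i j π = 0 ∨ X i j π = 1)
    -- suffix-determined: `X i j` depends only on the elements of priorities `i, …, n`
    (hsuffix : ∀ i j, 1 ≤ i → i < j → j ≤ n →
      ∀ π π' : S ≃ Fin n,
        (∀ k : Fin n, i ≤ (k : ℕ) + 1 → π.symm k = π'.symm k) →
        X i j π = X i j π')
    -- column sums
    (C : ℕ → (S ≃ Fin n) → ℝ)
    (hC : ∀ i π, C i π = ∑ j ∈ Finset.Icc (i + 1) n, X i j π)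
    -- averaging property
    (havg : ∀ m, 1 ≤ m → m ≤ n → ∀ t : ℕ → S,
      Set.InjOn t (Set.Icc (m + 1) n) →
      ∀ a b : S, a ∉ t '' Set.Icc (m + 1) n → b ∉ t '' Set.Icc (m + 1) n →
        cexp (fun π => (π a : ℕ) + 1 = m ∧
              ∀ k, m + 1 ≤ k → k ≤ n → (π (t k) : ℕ) + 1 = k)
            (fun π => ∑ i ∈ Finset.Icc 1 (min m (n - 1)), C i π)
          = cexp (fun π => (π b : ℕ) + 1 = m ∧
              ∀ k, m + 1 ≤ k → k ≤ n → (π (t k) : ℕ) + 1 = k)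
            (fun π => ∑ i ∈ Finset.Icc 1 (min m (n - 1)), C i π))
    (m : ℕ) (hm1 : 1 ≤ m) (hm2 : m ≤ n - 1)
    (t : ℕ → S) (ht : Set.InjOn t (Set.Icc (m + 1) n)) :
    cexp (fun π => ∀ k, m + 1 ≤ k → k ≤ n → (π (t k) : ℕ) + 1 = k)
        (fun π => (2 : ℝ) ^ (∑ i ∈ Finset.Icc 1 m, C i π))
      ≤ Real.exp (cexp (fun π => ∀ k, m + 1 ≤ k → k ≤ n → (π (t k) : ℕ) + 1 = k)
          (fun π => ∑ i ∈ Finset.Icc 1 m, C i π)) :=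
  stmt0_general n X hX01 hsuffix C hC havg m hm2 t ht
end

section
/- Let the family (X_{i,j})_{1 ≤ i < j ≤ n} be suffix-determined and satisfy the averaging property, and suppose E[X] ≤ c·n for some real c > 0, where X = Σ_{1≤i<j≤n} X_{i,j}. Then for every real β ≥ (c+1)/ln 2 one has Pr[X ≥ β·n] ≤ e^{−n}. -/
open scoped Classical BigOperators

/-- Probability of the event `A` under the uniform distribution on a finite type. -/
noncomputable def unifPr {α : Type} [Fintype α] (A : α → Prop) : ℝ :=
  ((Finset.univ.filter A).card : ℝ) / (Fintype.card α : ℝ)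

/-- Expectation of `f` under the uniform distribution on a finite type. -/
noncomputable def unifE {α : Type} [Fintype α] (f : α → ℝ) : ℝ :=
  (∑ x : α, f x) / (Fintype.card α : ℝ)

/-!
Write `Y m = C₁ + ⋯ + C_m` and condition on the elements of priority `> m`. Revealing the element
of priority `m + 1` splits such a class into subclasses on which the increment `C_{m+1}` is a
constant `d ≥ 0` (suffix-determination) and on which `Y (m + 1)` has the same mean (averaging).
Hence `E[2^Y] ≤ exp E[Y]` propagates from `m` to `m + 1`, using `2^d ≤ e^d`, and at `m = n` it
gives `E[2^X] ≤ e^{cn}`. Markov's inequality and `2^{βn} ≥ e^{(c+1)n}` finish the proof.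
-/

open Finset

theorem cexp_eq_expect {α : Type} [Fintype α] {A : α → Prop} {s : Finset α}
    (hs : ∀ x, x ∈ s ↔ A x) (f : α → ℝ) : cexp A f = 𝔼 x ∈ s, f x := by
  rw [cexp, ← expect_eq_sum_div_card]
  congr
  ext x
  simp [hs]

theorem unifE_eq_expect {α : Type} [Fintype α] (f : α → ℝ) : unifE f = 𝔼 x, f x :=
  (Fintype.expect_eq_sum_div_card _).symm

theorem unifPr_le_expect_div {α : Type} [Fintype α] {g : α → ℝ} (hg : ∀ x, 0 ≤ g x) {a : ℝ}
    (ha : 0 < a) : unifPr (fun x => a ≤ g x) ≤ (𝔼 x, g x) / a := by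
  rw [unifPr, Fintype.expect_eq_sum_div_card, div_right_comm]
  refine div_le_div_of_nonneg_right ?_ (Nat.cast_nonneg _)
  rw [le_div_iff₀ ha]
  calc (#(univ.filter fun x => a ≤ g x) : ℝ) * a
      ≤ ∑ x ∈ univ.filter (fun x => a ≤ g x), g x := by
        rw [← nsmul_eq_mul]
        exact card_nsmul_le_sum _ _ _ fun x hx => (mem_filter.1 hx).2
    _ ≤ ∑ x, g x := sum_le_sum_of_subset_of_nonneg (subset_univ _) fun x _ _ => hg x

theorem Real.two_rpow_le_exp {x : ℝ} (hx : 0 ≤ x) : (2 : ℝ) ^ x ≤ Real.exp x := by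
  rw [Real.rpow_def_of_pos two_pos, Real.exp_le_exp]
  exact mul_le_of_le_one_left hx (Real.log_two_lt_d9.le.trans (by norm_num))

theorem unifPr_le_exp_neg_of_expect_two_rpow_le {α : Type} [Fintype α] {Z : α → ℝ} {c β x : ℝ}
    (hx : 0 ≤ x) (hZ : 𝔼 a, (2 : ℝ) ^ Z a ≤ Real.exp (c * x)) (hβ : (c + 1) / Real.log 2 ≤ β) :
    unifPr (fun a => β * x ≤ Z a) ≤ Real.exp (-x) := by
  have h2pow : Real.exp ((c + 1) * x) ≤ 2 ^ (β * x) := by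
    rw [Real.rpow_def_of_pos two_pos, Real.exp_le_exp, ← mul_assoc, mul_comm (Real.log 2)]
    exact mul_le_mul_of_nonneg_right ((div_le_iff₀ (Real.log_pos one_lt_two)).1 hβ) hx
  calc unifPr (fun a => β * x ≤ Z a)
      = unifPr (fun a => (2 : ℝ) ^ (β * x) ≤ 2 ^ Z a) := by
        simp only [Real.rpow_le_rpow_left_iff one_lt_two]
    _ ≤ (𝔼 a, (2 : ℝ) ^ Z a) / 2 ^ (β * x) :=
        unifPr_le_expect_div (fun a => by positivity) (by positivity)
    _ ≤ Real.exp (c * x) / Real.exp ((c + 1) * x) :=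
        div_le_div₀ (Real.exp_nonneg _) hZ (Real.exp_pos _) h2pow
    _ = Real.exp (-x) := by
        rw [← Real.exp_sub]
        ring_nf

namespace Finset

variable {α β : Type*} [Fintype β] [DecidableEq β] {s : Finset α} {φ : α → β} {f : α → ℝ} {μ : ℝ}

theorem expect_le_of_forall_fiber_le (hs : s.Nonempty)
    (h : ∀ b, (s.filter (φ · = b)).Nonempty → 𝔼 x ∈ s.filter (φ · = b), f x ≤ μ) :
    𝔼 x ∈ s, f x ≤ μ := by
  have hcard : (0 : ℝ) < #s := by exact_mod_cast hs.card_pos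
  refine le_of_mul_le_mul_left ?_ hcard
  calc (#s : ℝ) * 𝔼 x ∈ s, f x
      = ∑ b, (#(s.filter (φ · = b)) : ℝ) * 𝔼 x ∈ s.filter (φ · = b), f x := by
        simp only [card_mul_expect]
        exact (sum_fiberwise s φ f).symm
    _ ≤ ∑ b, (#(s.filter (φ · = b)) : ℝ) * μ := by
        refine sum_le_sum fun b _ => ?_
        rcases (s.filter (φ · = b)).eq_empty_or_nonempty with hb | hb
        · simp [hb]
        · exact mul_le_mul_of_nonneg_left (h b hb) (Nat.cast_nonneg _)
    _ = #s * μ := by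
        rw [← sum_mul, card_eq_sum_card_fiberwise fun x _ => mem_univ (φ x)]
        push_cast; rfl

theorem expect_eq_of_forall_fiber_eq (hs : s.Nonempty)
    (h : ∀ b, (s.filter (φ · = b)).Nonempty → 𝔼 x ∈ s.filter (φ · = b), f x = μ) :
    𝔼 x ∈ s, f x = μ := by
  refine le_antisymm (expect_le_of_forall_fiber_le hs fun b hb => (h b hb).le) ?_
  have := expect_le_of_forall_fiber_le (f := fun x => -f x) (μ := -μ) hs
    fun b hb => by rw [expect_neg_distrib, h b hb]
  rwa [expect_neg_distrib, neg_le_neg_iff] at this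

theorem expect_two_rpow_add_le {s : Finset α} {Y : α → ℝ} {d : ℝ} (hd : 0 ≤ d)
    (h : 𝔼 x ∈ s, (2 : ℝ) ^ Y x ≤ Real.exp (𝔼 x ∈ s, Y x)) :
    𝔼 x ∈ s, (2 : ℝ) ^ (Y x + d) ≤ Real.exp (𝔼 x ∈ s, (Y x + d)) := by
  rcases s.eq_empty_or_nonempty with rfl | hs
  · simp
  calc 𝔼 x ∈ s, (2 : ℝ) ^ (Y x + d)
      = 2 ^ d * 𝔼 x ∈ s, (2 : ℝ) ^ Y x := by
        rw [mul_expect]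
        exact expect_congr rfl fun x _ => by rw [Real.rpow_add two_pos, mul_comm]
    _ ≤ Real.exp d * Real.exp (𝔼 x ∈ s, Y x) :=
        mul_le_mul (Real.two_rpow_le_exp hd) h (by positivity) (Real.exp_nonneg _)
    _ = Real.exp (𝔼 x ∈ s, (Y x + d)) := by
        rw [← Real.exp_add, expect_add_distrib, expect_const hs, add_comm]

end Finset

section ColumnSums

variable {Ω : Type*} {n : ℕ} {X : ℕ → ℕ → Ω → ℝ} {C : ℕ → Ω → ℝ}

theorem colSum_nonneg (hX01 : ∀ i j π, 1 ≤ i → i < j → j ≤ n → X i j π = 0 ∨ X i j π = 1)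
    (hC : ∀ i π, C i π = ∑ j ∈ Icc (i + 1) n, X i j π) {i : ℕ} (hi : 1 ≤ i)
    (π : Ω) : 0 ≤ C i π := by
  rw [hC]
  refine sum_nonneg fun j hj => ?_
  rw [mem_Icc] at hj
  rcases hX01 i j π hi (by omega) hj.2 with h | h <;> simp [h]

theorem sum_colSum_Icc_min (hC : ∀ i π, C i π = ∑ j ∈ Icc (i + 1) n, X i j π) {m : ℕ}
    (hm : m ≤ n) (π : Ω) :
    ∑ i ∈ Icc 1 (min m (n - 1)), C i π = ∑ i ∈ Icc 1 m, C i π := by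
  rcases le_or_gt m (n - 1) with h | h
  · rw [min_eq_left h]
  obtain ⟨k, rfl, rfl⟩ : ∃ k, m = k + 1 ∧ n = k + 1 := ⟨m - 1, by omega, by omega⟩
  have hCn : C (k + 1) π = 0 := by
    rw [hC, Icc_eq_empty (by omega), sum_empty]
  rw [Nat.add_sub_cancel, min_eq_right k.le_succ, sum_Icc_succ_top (by omega : 1 ≤ k + 1), hCn,
    add_zero]

end ColumnSums

section SuffixClass

variable {S : Type} [Fintype S] [DecidableEq S] {n : ℕ}

/-- Position `k : Fin n` carries priority `k + 1`, so `suffixClass σ m` consists of the `π` that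
give every priority above `m` to the same element as `σ`. -/
def suffixClass (σ : S ≃ Fin n) (m : ℕ) : Finset (S ≃ Fin n) :=
  univ.filter fun π => ∀ k : Fin n, m ≤ (k : ℕ) → π.symm k = σ.symm k

theorem mem_suffixClass {σ π : S ≃ Fin n} {m : ℕ} :
    π ∈ suffixClass σ m ↔ ∀ k : Fin n, m ≤ (k : ℕ) → π.symm k = σ.symm k := by
  simp [suffixClass]

theorem mem_suffixClass_self (σ : S ≃ Fin n) (m : ℕ) : σ ∈ suffixClass σ m :=
  mem_suffixClass.2 fun _ _ => rfl

theorem suffixClass_self (σ : S ≃ Fin n) : suffixClass σ n = univ :=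
  eq_univ_of_forall fun _ => mem_suffixClass.2 fun k hk => absurd k.isLt (not_lt.2 hk)

theorem filter_suffixClass_succ {m : ℕ} (hm : m < n) {σ π' : S ≃ Fin n}
    (hπ' : π' ∈ suffixClass σ (m + 1)) :
    (suffixClass σ (m + 1)).filter (fun π => π.symm ⟨m, hm⟩ = π'.symm ⟨m, hm⟩)
      = suffixClass π' m := by
  ext π
  simp only [mem_filter, mem_suffixClass] at hπ' ⊢
  constructor
  · rintro ⟨hπ, hπm⟩ k hk
    rcases hk.eq_or_lt with hk | hk
    · obtain rfl : k = ⟨m, hm⟩ := Fin.ext hk.symm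
      exact hπm
    · rw [hπ k hk, hπ' k hk]
  · intro hπ
    exact ⟨fun k hk => (hπ k (by omega)).trans (hπ' k hk), hπ _ le_rfl⟩

theorem expect_two_rpow_le_exp_expect_suffixClass (Y : ℕ → (S ≃ Fin n) → ℝ)
    (hY₀ : ∀ π, Y 0 π = 0)
    (hmono : ∀ m < n, ∀ π, Y m π ≤ Y (m + 1) π)
    (hstep : ∀ m < n, ∀ σ, ∀ π ∈ suffixClass σ m, Y (m + 1) π - Y m π = Y (m + 1) σ - Y m σ)
    (havg : ∀ m < n, ∀ σ, ∀ σ' ∈ suffixClass σ (m + 1),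
      𝔼 π ∈ suffixClass σ' m, Y (m + 1) π = 𝔼 π ∈ suffixClass σ m, Y (m + 1) π) :
    ∀ m ≤ n, ∀ σ, 𝔼 π ∈ suffixClass σ m, (2 : ℝ) ^ Y m π
      ≤ Real.exp (𝔼 π ∈ suffixClass σ m, Y m π) := by
  intro m
  induction m with
  | zero =>
    intro _ σ
    simp [hY₀, expect_const ⟨σ, mem_suffixClass_self σ 0⟩]
  | succ m ih =>
    intro hm σ
    have hm : m < n := hm
    have hY : ∀ σ', ∀ π ∈ suffixClass σ' m, Y (m + 1) π = Y m π + (Y (m + 1) σ' - Y m σ') :=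
      fun σ' π hπ => by rw [← hstep m hm σ' π hπ]; ring
    have hfiber_le (σ' : S ≃ Fin n) :
        𝔼 π ∈ suffixClass σ' m, (2 : ℝ) ^ Y (m + 1) π
          ≤ Real.exp (𝔼 π ∈ suffixClass σ' m, Y (m + 1) π) := by
      rw [expect_congr rfl fun π hπ => by rw [hY σ' π hπ],
        expect_congr rfl (hY σ')]
      exact expect_two_rpow_add_le (sub_nonneg.2 (hmono m hm σ')) (ih hm.le σ')
    set μ := 𝔼 π ∈ suffixClass σ m, Y (m + 1) π
    have hfiber (b : S) (hb : ((suffixClass σ (m + 1)).filter (·.symm ⟨m, hm⟩ = b)).Nonempty) :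
        ∃ π' ∈ suffixClass σ (m + 1),
          (suffixClass σ (m + 1)).filter (·.symm ⟨m, hm⟩ = b) = suffixClass π' m := by
      obtain ⟨π', hπ'⟩ := hb
      obtain ⟨hmem, rfl⟩ := mem_filter.1 hπ'
      exact ⟨π', hmem, filter_suffixClass_succ hm hmem⟩
    have hσ : (suffixClass σ (m + 1)).Nonempty := ⟨σ, mem_suffixClass_self σ _⟩
    have hmean : 𝔼 π ∈ suffixClass σ (m + 1), Y (m + 1) π = μ :=
      expect_eq_of_forall_fiber_eq (φ := (·.symm ⟨m, hm⟩)) hσ fun b hb => by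
        obtain ⟨π', hπ', hfib⟩ := hfiber b hb
        rw [hfib, havg m hm σ π' hπ']
    rw [hmean]
    refine expect_le_of_forall_fiber_le (φ := (·.symm ⟨m, hm⟩)) hσ fun b hb => ?_
    obtain ⟨π', hπ', hfib⟩ := hfiber b hb
    rw [hfib]
    exact (hfiber_le π').trans_eq (congrArg Real.exp (havg m hm σ π' hπ'))

theorem mem_suffixClass_iff_priority {m : ℕ} (hm : m < n) {σ π : S ≃ Fin n} {t : ℕ → S}
    (ht : ∀ k (hk : k ≤ n), m + 1 + 1 ≤ k → t k = σ.symm ⟨k - 1, by omega⟩) :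
    π ∈ suffixClass σ m ↔ (π (σ.symm ⟨m, hm⟩) : ℕ) + 1 = m + 1 ∧
      ∀ k, m + 1 + 1 ≤ k → k ≤ n → (π (t k) : ℕ) + 1 = k := by
  rw [mem_suffixClass]
  constructor
  · intro h
    refine ⟨by rw [← h ⟨m, hm⟩ le_rfl]; simp, fun k hk₁ hk₂ => ?_⟩
    rw [ht k hk₂ hk₁, ← h ⟨k - 1, by omega⟩ (by simp only; omega)]
    simp only [Equiv.apply_symm_apply]
    omega
  · rintro ⟨hm', h⟩ k hk
    rw [Equiv.symm_apply_eq]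
    rcases hk.eq_or_lt with hk | hk
    · obtain rfl : k = ⟨m, hm⟩ := Fin.ext hk.symm
      exact Fin.ext (by omega)
    · have := h (k + 1) (by omega) (by omega)
      rw [ht (k + 1) (by omega) (by omega)] at this
      exact Fin.ext (by simpa using this.symm)

theorem expect_suffixClass_eq_of_averaging {m : ℕ} (hm : m < n) {Z : (S ≃ Fin n) → ℝ}
    (havg : ∀ t : ℕ → S, Set.InjOn t (Set.Icc (m + 1 + 1) n) →
      ∀ a b : S, a ∉ t '' Set.Icc (m + 1 + 1) n → b ∉ t '' Set.Icc (m + 1 + 1) n →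
        cexp (fun π => (π a : ℕ) + 1 = m + 1 ∧
              ∀ k, m + 1 + 1 ≤ k → k ≤ n → (π (t k) : ℕ) + 1 = k) Z
          = cexp (fun π => (π b : ℕ) + 1 = m + 1 ∧
              ∀ k, m + 1 + 1 ≤ k → k ≤ n → (π (t k) : ℕ) + 1 = k) Z)
    {σ σ' : S ≃ Fin n} (hσ' : σ' ∈ suffixClass σ (m + 1)) :
    𝔼 π ∈ suffixClass σ' m, Z π = 𝔼 π ∈ suffixClass σ m, Z π := by
  let t : ℕ → S := fun k => if hk : k - 1 < n then σ.symm ⟨k - 1, hk⟩ else σ.symm ⟨m, hm⟩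
  have ht : ∀ τ ∈ suffixClass σ (m + 1), ∀ k (hk : k ≤ n), m + 1 + 1 ≤ k →
      t k = τ.symm ⟨k - 1, by omega⟩ := fun τ hτ k hk hmk => by
    simp only [t, dif_pos (show k - 1 < n by omega)]
    exact (mem_suffixClass.1 hτ _ (by simp only; omega)).symm
  have hσ := mem_suffixClass_self σ (m + 1)
  have hinj : Set.InjOn t (Set.Icc (m + 1 + 1) n) := fun x hx y hy hxy => by
    rw [Set.mem_Icc] at hx hy
    rw [ht σ hσ x hx.2 hx.1, ht σ hσ y hy.2 hy.1] at hxy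
    have := Fin.ext_iff.1 (σ.symm.injective hxy)
    simp only at this
    omega
  have hnotMem : ∀ τ ∈ suffixClass σ (m + 1), τ.symm ⟨m, hm⟩ ∉ t '' Set.Icc (m + 1 + 1) n := by
    rintro τ hτ ⟨k, hk, hkτ⟩
    rw [Set.mem_Icc] at hk
    rw [ht τ hτ k hk.2 hk.1] at hkτ
    have := Fin.ext_iff.1 (τ.symm.injective hkτ)
    simp only at this
    omega
  have := havg t hinj _ _ (hnotMem σ' hσ') (hnotMem σ hσ)
  rwa [cexp_eq_expect fun π => mem_suffixClass_iff_priority hm (ht σ' hσ'),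
    cexp_eq_expect fun π => mem_suffixClass_iff_priority hm (ht σ hσ)] at this

theorem colSum_eq_of_mem_suffixClass {X : ℕ → ℕ → (S ≃ Fin n) → ℝ} {C : ℕ → (S ≃ Fin n) → ℝ}
    (hsuffix : ∀ i j, 1 ≤ i → i < j → j ≤ n → ∀ π π' : S ≃ Fin n,
      (∀ k : Fin n, i ≤ (k : ℕ) + 1 → π.symm k = π'.symm k) → X i j π = X i j π')
    (hC : ∀ i π, C i π = ∑ j ∈ Icc (i + 1) n, X i j π) {m : ℕ} {σ π : S ≃ Fin n}
    (hπ : π ∈ suffixClass σ m) : C (m + 1) π = C (m + 1) σ := by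
  rw [hC, hC]
  refine sum_congr rfl fun j hj => ?_
  rw [mem_Icc] at hj
  exact hsuffix (m + 1) j (by omega) (by omega) hj.2 π σ
    fun k hk => mem_suffixClass.1 hπ k (by omega)

end SuffixClass

theorem stmt2_general
    {S : Type} [Fintype S] [DecidableEq S] (n : ℕ)
    (X : ℕ → ℕ → (S ≃ Fin n) → ℝ)
    (hX01 : ∀ i j π, 1 ≤ i → i < j → j ≤ n → X i j π = 0 ∨ X i j π = 1)
    -- suffix-determined
    (hsuffix : ∀ i j, 1 ≤ i → i < j → j ≤ n →
      ∀ π π' : S ≃ Fin n,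
        (∀ k : Fin n, i ≤ (k : ℕ) + 1 → π.symm k = π'.symm k) →
        X i j π = X i j π')
    -- column sums
    (C : ℕ → (S ≃ Fin n) → ℝ)
    (hC : ∀ i π, C i π = ∑ j ∈ Finset.Icc (i + 1) n, X i j π)
    -- averaging property
    (havg : ∀ m, 1 ≤ m → m ≤ n → ∀ t : ℕ → S,
      Set.InjOn t (Set.Icc (m + 1) n) →
      ∀ a b : S, a ∉ t '' Set.Icc (m + 1) n → b ∉ t '' Set.Icc (m + 1) n →
        cexp (fun π => (π a : ℕ) + 1 = m ∧
              ∀ k, m + 1 ≤ k → k ≤ n → (π (t k) : ℕ) + 1 = k)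
            (fun π => ∑ i ∈ Finset.Icc 1 (min m (n - 1)), C i π)
          = cexp (fun π => (π b : ℕ) + 1 = m ∧
              ∀ k, m + 1 ≤ k → k ≤ n → (π (t k) : ℕ) + 1 = k)
            (fun π => ∑ i ∈ Finset.Icc 1 (min m (n - 1)), C i π))
    (c : ℝ)
    (hEX : unifE (fun π => ∑ i ∈ Finset.Icc 1 (n - 1), ∑ j ∈ Finset.Icc (i + 1) n, X i j π)
      ≤ c * n) :
    ∀ β : ℝ, (c + 1) / Real.log 2 ≤ β →
      unifPr (fun π =>
          β * n ≤ ∑ i ∈ Finset.Icc 1 (n - 1), ∑ j ∈ Finset.Icc (i + 1) n, X i j π)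
        ≤ Real.exp (-(n : ℝ)) := by
  intro β hβ
  set Y : ℕ → (S ≃ Fin n) → ℝ := fun m π => ∑ i ∈ Icc 1 m, C i π with hY
  have hY_succ (m : ℕ) (π : S ≃ Fin n) : Y (m + 1) π = Y m π + C (m + 1) π :=
    sum_Icc_succ_top (by omega) _
  have hXY (π : S ≃ Fin n) :
      ∑ i ∈ Icc 1 (n - 1), ∑ j ∈ Icc (i + 1) n, X i j π = Y n π := by
    simp only [← hC, hY, ← sum_colSum_Icc_min hC le_rfl, min_eq_right (Nat.sub_le n 1)]
  have hmgf : 𝔼 π, (2 : ℝ) ^ Y n π ≤ Real.exp (c * n) := by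
    rcases isEmpty_or_nonempty (S ≃ Fin n) with _ | ⟨⟨σ⟩⟩
    · simpa [univ_eq_empty] using Real.exp_nonneg _
    have := expect_two_rpow_le_exp_expect_suffixClass Y (by simp [hY])
      (fun m _ π => by linarith [hY_succ m π, colSum_nonneg hX01 hC (by omega : 1 ≤ m + 1) π])
      (fun m _ σ π hπ => by
        rw [hY_succ, hY_succ, colSum_eq_of_mem_suffixClass hsuffix hC hπ]; ring)
      (fun m hm σ σ' hσ' => by
        simpa only [sum_colSum_Icc_min hC hm] using
          expect_suffixClass_eq_of_averaging hm (havg (m + 1) (by omega) hm) hσ')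
      n le_rfl σ
    rw [suffixClass_self] at this
    refine this.trans (Real.exp_le_exp.2 ?_)
    simpa only [unifE_eq_expect, hXY] using hEX
  simp only [hXY]
  exact unifPr_le_exp_neg_of_expect_two_rpow_le n.cast_nonneg hmgf hβ

/-- for a suffix-determined family `(X i j)_{1 ≤ i < j ≤ n}` of
`{0,1}`-valued random variables on uniformly random bijections `π : S → {1,…,n}`
(encoded as `π : S ≃ Fin n`, priority of `s` being `(π s : ℕ) + 1`) satisfying
the averaging property, if `E[X] ≤ c·n` for some real `c > 0`, where
`X = ∑_{1 ≤ i < j ≤ n} X i j`, then for every real `β ≥ (c+1)/ln 2` one has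
`Pr[X ≥ β·n] ≤ e^{−n}`. -/
theorem stmt2
    {S : Type} [Fintype S] [DecidableEq S] (n : ℕ) (hn : 1 ≤ n)
    (hcard : Fintype.card S = n)
    (X : ℕ → ℕ → (S ≃ Fin n) → ℝ)
    (hX01 : ∀ i j π, 1 ≤ i → i < j → j ≤ n → X i j π = 0 ∨ X i j π = 1)
    -- suffix-determined
    (hsuffix : ∀ i j, 1 ≤ i → i < j → j ≤ n →
      ∀ π π' : S ≃ Fin n,
        (∀ k : Fin n, i ≤ (k : ℕ) + 1 → π.symm k = π'.symm k) →
        X i j π = X i j π')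
    -- column sums
    (C : ℕ → (S ≃ Fin n) → ℝ)
    (hC : ∀ i π, C i π = ∑ j ∈ Finset.Icc (i + 1) n, X i j π)
    -- averaging property
    (havg : ∀ m, 1 ≤ m → m ≤ n → ∀ t : ℕ → S,
      Set.InjOn t (Set.Icc (m + 1) n) →
      ∀ a b : S, a ∉ t '' Set.Icc (m + 1) n → b ∉ t '' Set.Icc (m + 1) n →
        cexp (fun π => (π a : ℕ) + 1 = m ∧
              ∀ k, m + 1 ≤ k → k ≤ n → (π (t k) : ℕ) + 1 = k)
            (fun π => ∑ i ∈ Finset.Icc 1 (min m (n - 1)), C i π)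
          = cexp (fun π => (π b : ℕ) + 1 = m ∧
              ∀ k, m + 1 ≤ k → k ≤ n → (π (t k) : ℕ) + 1 = k)
            (fun π => ∑ i ∈ Finset.Icc 1 (min m (n - 1)), C i π))
    (c : ℝ) (hc : 0 < c)
    (hEX : unifE (fun π => ∑ i ∈ Finset.Icc 1 (n - 1), ∑ j ∈ Finset.Icc (i + 1) n, X i j π)
      ≤ c * n) :
    ∀ β : ℝ, (c + 1) / Real.log 2 ≤ β →
      unifPr (fun π =>
          β * n ≤ ∑ i ∈ Finset.Icc 1 (n - 1), ∑ j ∈ Finset.Icc (i + 1) n, X i j π)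
        ≤ Real.exp (-(n : ℝ)) :=
  stmt2_general n X hX01 hsuffix C hC havg c hEX
end

section
/- Let δ be a positive integer, let n ≥ 1 be an integer, and let (F_σ)_{σ ∈ I(n)} be events in a probability space such that Pr[F_σ] ≤ Π_{i=1}^{ℓ(σ)} (δ / b_i) for every σ = (b_0, b_1, …, b_ℓ) ∈ I(n). Then Σ_{σ ∈ I(n)} Pr[F_σ] ≤ (n+1)(n+2)⋯(n+δ) / (δ+1)!; in particular, the expected number of indices σ ∈ I(n) whose event F_σ occurs is at most (n+1)(n+2)⋯(n+δ) / (δ+1)!. -/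
open MeasureTheory
open scoped ProbabilityTheory BigOperators Classical

/-!
Dropping `b₀ = 1` identifies `I(n)` with the subsets of `{2, …, n}`, so the sum of the bounds
`∏ δ / bᵢ` over `I(n)` is the expansion of `∏_{b=2}^{n} (1 + δ / b) = ∏_{b=2}^{n} (b + δ) / b`,
which telescopes to `(n + δ)! / (n! (δ + 1)!)`. The expected number of occurring events is the sum
of their probabilities.
-/

open Finset

theorem Finset.sum_filter_mem_powerset_erase {α β : Type*} [DecidableEq α] [AddCommMonoid β]
    {s : Finset α} {a : α} (ha : a ∈ s) (f : Finset α → β) :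
    ∑ A ∈ s.powerset.filter (a ∈ ·), f (A.erase a) = ∑ B ∈ (s.erase a).powerset, f B := by
  refine sum_nbij' (·.erase a) (insert a ·) ?_ ?_ ?_ ?_ fun _ _ => rfl
  · intro A hA
    simp only [mem_filter, mem_powerset] at hA ⊢
    exact erase_subset_erase a hA.1
  · intro B hB
    simp only [mem_filter, mem_powerset] at hB ⊢
    exact ⟨insert_subset ha (hB.trans (erase_subset a s)), mem_insert_self a B⟩
  · intro A hA
    exact insert_erase (mem_filter.1 hA).2
  · intro B hB
    exact erase_insert fun h => by simpa using mem_powerset.1 hB h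

open Nat in
theorem Nat.factorial_mul_prod_Icc (m p : ℕ) : m ! * ∏ k ∈ Icc (m + 1) (m + p), k = (m + p)! := by
  rw [← factorial_mul_ascFactorial, ascFactorial_eq_prod_range, ← Ico_add_one_right_eq_Icc,
    prod_Ico_eq_prod_range, show m + p + 1 - (m + 1) = p by omega]

open Nat in
theorem prod_Ioc_one_add_div_eq_factorial_div (δ : ℕ) {n : ℕ} (hn : 1 ≤ n) :
    ∏ b ∈ Ioc 1 n, (1 + (δ : ℝ) / b) = (n + δ)! / (n ! * (δ + 1)!) := by
  induction n, hn using Nat.le_induction with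
  | base => simp [add_comm 1 δ, div_self, factorial_ne_zero]
  | succ n hn ih =>
    rw [prod_Ioc_succ_top hn, ih, add_right_comm, factorial_succ (n + δ), factorial_succ n]
    push_cast
    field_simp
    ring

open Nat in
theorem prod_Icc_natCast_eq_factorial_div (m p : ℕ) :
    ∏ k ∈ Icc (m + 1) (m + p), (k : ℝ) = (m + p)! / m ! := by
  rw [eq_div_iff (by positivity), mul_comm, ← Nat.cast_prod, ← Nat.cast_mul, factorial_mul_prod_Icc]

theorem integral_card_filter_mem_eq_sum_measureReal {Ω ι : Type*} [MeasurableSpace Ω]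
    (μ : Measure Ω) [IsFiniteMeasure μ] (S : Finset ι) {F : ι → Set Ω} (hF : ∀ i ∈ S, MeasurableSet (F i)) :
    ∫ ω, (#{i ∈ S | ω ∈ F i} : ℝ) ∂μ = ∑ i ∈ S, μ.real (F i) := by
  have hcount : ∀ ω, (#{i ∈ S | ω ∈ F i} : ℝ) = ∑ i ∈ S, (F i).indicator 1 ω := fun ω => by
    simp [Set.indicator_apply]
  simp_rw [hcount]
  rw [integral_finsetSum _ fun i hi => (integrable_const 1).indicator (hF i hi)]
  exact sum_congr rfl fun i hi => integral_indicator_one (hF i hi)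

theorem stmt9_general
    {Ω : Type} [MeasureSpace Ω] [IsProbabilityMeasure (ℙ : Measure Ω)]
    (δ : ℕ) (n : ℕ) (hn : 1 ≤ n)
    (F : Finset ℕ → Set Ω) (hFmeas : ∀ A, MeasurableSet (F A))
    (hF : ∀ A ∈ (Finset.Icc 1 n).powerset.filter (fun A => 1 ∈ A),
      (ℙ (F A)).toReal ≤ ∏ b ∈ A.erase 1, (δ : ℝ) / (b : ℝ)) :
    (∑ A ∈ (Finset.Icc 1 n).powerset.filter (fun A => 1 ∈ A), (ℙ (F A)).toReal)
        ≤ (∏ k ∈ Finset.Icc (n + 1) (n + δ), (k : ℝ)) / (Nat.factorial (δ + 1))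
      ∧ (∫ ω, ((((Finset.Icc 1 n).powerset.filter (fun A => 1 ∈ A)).filter
            (fun A => ω ∈ F A)).card : ℝ))
        ≤ (∏ k ∈ Finset.Icc (n + 1) (n + δ), (k : ℝ)) / (Nat.factorial (δ + 1)) := by
  have hbound : ∑ A ∈ (Icc 1 n).powerset.filter (1 ∈ ·), ∏ b ∈ A.erase 1, (δ : ℝ) / b
      = (∏ k ∈ Icc (n + 1) (n + δ), (k : ℝ)) / (δ + 1).factorial := by
    rw [sum_filter_mem_powerset_erase (left_mem_Icc.2 hn) fun B => ∏ b ∈ B, (δ : ℝ) / b,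
      Icc_erase_left, ← prod_one_add,
      prod_Ioc_one_add_div_eq_factorial_div δ hn, prod_Icc_natCast_eq_factorial_div, div_div]
  have hsum : ∑ A ∈ (Icc 1 n).powerset.filter (1 ∈ ·), (ℙ (F A)).toReal
      ≤ (∏ k ∈ Icc (n + 1) (n + δ), (k : ℝ)) / (δ + 1).factorial :=
    hbound ▸ sum_le_sum hF
  exact ⟨hsum,
    (integral_card_filter_mem_eq_sum_measureReal ℙ _ fun A _ => hFmeas A).trans_le hsum⟩

/-- let `δ` be a positive integer, `n ≥ 1` an integer, and
`(F σ)_{σ ∈ I(n)}` events in a probability space such that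
`Pr[F σ] ≤ ∏_{i=1}^{ℓ(σ)} (δ / b_i)` for every `σ = (b₀,…,b_ℓ) ∈ I(n)`.
A sequence `σ ∈ I(n)` (with `1 = b₀ < b₁ < ⋯ < b_ℓ ≤ n`) is encoded as its
underlying set `A ⊆ {1,…,n}` with `1 ∈ A`, the product being over `A.erase 1`.
Then `∑_{σ ∈ I(n)} Pr[F σ] ≤ (n+1)(n+2)⋯(n+δ) / (δ+1)!`; in particular, the
expected number of `σ ∈ I(n)` whose event `F σ` occurs is at most
`(n+1)(n+2)⋯(n+δ) / (δ+1)!`. -/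
theorem stmt9
    {Ω : Type} [MeasureSpace Ω] [IsProbabilityMeasure (ℙ : Measure Ω)]
    (δ : ℕ) (hδ : 0 < δ) (n : ℕ) (hn : 1 ≤ n)
    (F : Finset ℕ → Set Ω) (hFmeas : ∀ A, MeasurableSet (F A))
    (hF : ∀ A ∈ (Finset.Icc 1 n).powerset.filter (fun A => 1 ∈ A),
      (ℙ (F A)).toReal ≤ ∏ b ∈ A.erase 1, (δ : ℝ) / (b : ℝ)) :
    (∑ A ∈ (Finset.Icc 1 n).powerset.filter (fun A => 1 ∈ A), (ℙ (F A)).toReal)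
        ≤ (∏ k ∈ Finset.Icc (n + 1) (n + δ), (k : ℝ)) / (Nat.factorial (δ + 1))
      ∧ (∫ ω, ((((Finset.Icc 1 n).powerset.filter (fun A => 1 ∈ A)).filter
            (fun A => ω ∈ F A)).card : ℝ))
        ≤ (∏ k ∈ Finset.Icc (n + 1) (n + δ), (k : ℝ)) / (Nat.factorial (δ + 1)) :=
  stmt9_general δ n hn F hFmeas hF
end

section
/- Let δ ≥ 1 be a real number, let n ≥ 2 be an integer, and let Z_2, Z_3, …, Z_n be mutually independent {0,1}-valued random variables with E[Z_j] ≤ δ/j for every j ∈ {2,…,n}. Then for every real β > 0: Pr[Σ_{j=2}^n Z_j ≥ β·ln n] ≤ exp(δ·(H_n − 1) − β·(ln n)·(ln 2)) ≤ n^{δ − β·ln 2}. -/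
open MeasureTheory ProbabilityTheory Real Finset

/-!
Chernoff's method with the exponent `t = ln 2`. For a `{0,1}`-valued `X` one has
`exp (t X) = 1 + (eᵗ - 1) X`, so `E[exp (t X)] = 1 + (eᵗ - 1) E[X] ≤ exp ((eᵗ - 1) E[X])`;
by independence the moment generating function of `∑ Z j` at `ln 2` is at most
`exp (∑ E[Z j]) ≤ exp (δ (H_n - 1))`, and Markov's inequality for `exp (ln 2 · ∑ Z j)` gives the
first bound. The second follows from `H_n ≤ 1 + ln n`.
-/

namespace ProbabilityTheory

variable {Ω : Type*} {m : MeasurableSpace Ω} {μ : Measure Ω} {X : Ω → ℝ}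

lemma exp_mul_eq_one_add_of_eq_zero_or_eq_one {x : ℝ} (t : ℝ) (hx : x = 0 ∨ x = 1) :
    exp (t * x) = 1 + (exp t - 1) * x := by
  rcases hx with rfl | rfl <;> simp

lemma integrable_of_eq_zero_or_eq_one [IsFiniteMeasure μ] (hX : AEStronglyMeasurable X μ)
    (h01 : ∀ ω, X ω = 0 ∨ X ω = 1) : Integrable X μ :=
  (integrable_const 1).mono' hX <| ae_of_all _ fun ω => by rcases h01 ω with h | h <;> simp [h]

lemma integrable_exp_mul_of_eq_zero_or_eq_one [IsFiniteMeasure μ]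
    (hX : AEStronglyMeasurable X μ) (h01 : ∀ ω, X ω = 0 ∨ X ω = 1) (t : ℝ) :
    Integrable (fun ω => exp (t * X ω)) μ := by
  simp_rw [exp_mul_eq_one_add_of_eq_zero_or_eq_one t (h01 _)]
  exact (integrable_const 1).add ((integrable_of_eq_zero_or_eq_one hX h01).const_mul _)

lemma mgf_eq_of_eq_zero_or_eq_one [IsProbabilityMeasure μ] (hX : AEStronglyMeasurable X μ)
    (h01 : ∀ ω, X ω = 0 ∨ X ω = 1) (t : ℝ) :
    mgf X μ t = 1 + (exp t - 1) * μ[X] := by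
  simp_rw [mgf, exp_mul_eq_one_add_of_eq_zero_or_eq_one t (h01 _)]
  rw [integral_add (integrable_const 1) ((integrable_of_eq_zero_or_eq_one hX h01).const_mul _),
    integral_const_mul]
  simp

lemma mgf_le_exp_of_eq_zero_or_eq_one [IsProbabilityMeasure μ] (hX : AEStronglyMeasurable X μ)
    (h01 : ∀ ω, X ω = 0 ∨ X ω = 1) (t : ℝ) :
    mgf X μ t ≤ exp ((exp t - 1) * μ[X]) := by
  rw [mgf_eq_of_eq_zero_or_eq_one hX h01]
  linarith [add_one_le_exp ((exp t - 1) * μ[X])]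

theorem measure_sum_ge_le_of_iIndepFun_of_eq_zero_or_eq_one {ι : Type*} [Fintype ι]
    [IsProbabilityMeasure μ] {X : ι → Ω → ℝ} (h_indep : iIndepFun X μ)
    (h_meas : ∀ i, Measurable (X i)) (h01 : ∀ i ω, X i ω = 0 ∨ X i ω = 1)
    {t : ℝ} (ht : 0 ≤ t) (ε : ℝ) :
    μ.real {ω | ε ≤ ∑ i, X i ω} ≤ exp ((exp t - 1) * ∑ i, μ[X i] - t * ε) := by
  have h_int : Integrable (fun ω => exp (t * (∑ i, X i) ω)) μ :=
    h_indep.integrable_exp_mul_sum h_meas fun i _ =>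
      integrable_exp_mul_of_eq_zero_or_eq_one (h_meas i).aestronglyMeasurable (h01 i) t
  calc μ.real {ω | ε ≤ ∑ i, X i ω}
      ≤ exp (-t * ε) * mgf (∑ i, X i) μ t := by
        simpa only [Finset.sum_apply] using measure_ge_le_exp_mul_mgf ε ht h_int
    _ = exp (-t * ε) * ∏ i, mgf (X i) μ t := by rw [h_indep.mgf_sum h_meas]
    _ ≤ exp (-t * ε) * ∏ i, exp ((exp t - 1) * μ[X i]) := by
        gcongr with i
        · exact fun i _ => mgf_nonneg
        · exact mgf_le_exp_of_eq_zero_or_eq_one (h_meas i).aestronglyMeasurable (h01 i) t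
    _ = exp ((exp t - 1) * ∑ i, μ[X i] - t * ε) := by
        rw [← exp_sum, ← exp_add, Finset.mul_sum]
        ring_nf

end ProbabilityTheory

lemma sum_Icc_two_one_div_eq {n : ℕ} (hn : 1 ≤ n) :
    ∑ j ∈ Icc 2 n, (1 : ℝ) / j = ∑ k ∈ Icc 1 n, (1 : ℝ) / k - 1 := by
  rw [← Finset.insert_Icc_add_one_left_eq_Icc hn, sum_insert (by simp)]
  simp

lemma sum_Icc_one_div_le_one_add_log (n : ℕ) :
    ∑ k ∈ Icc 1 n, (1 : ℝ) / k ≤ 1 + log n := by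
  simpa [harmonic_eq_sum_Icc] using harmonic_le_one_add_log n

/-- let `δ ≥ 1` be real, `n ≥ 2` an integer, and
`Z 2, Z 3, …, Z n` mutually independent `{0,1}`-valued random variables with
`E[Z j] ≤ δ/j` for every `j ∈ {2,…,n}`. Then for every real `β > 0`:
`Pr[∑_{j=2}^n Z j ≥ β·ln n] ≤ exp (δ·(H_n − 1) − β·(ln n)·(ln 2))
≤ n^(δ − β·ln 2)`, where `H_n = ∑_{k=1}^n 1/k`. -/
theorem stmt12
    {Ω : Type} [MeasureSpace Ω] [IsProbabilityMeasure (ℙ : Measure Ω)]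
    (δ : ℝ) (hδ : 1 ≤ δ) (n : ℕ) (hn : 2 ≤ n)
    (Z : ℕ → Ω → ℝ)
    (hmeas : ∀ j, Measurable (Z j))
    (h01 : ∀ j ω, Z j ω = 0 ∨ Z j ω = 1)
    (hindep : ProbabilityTheory.iIndepFun
      (fun j : (Finset.Icc 2 n : Finset ℕ) => Z j) ℙ)
    (hE : ∀ j, 2 ≤ j → j ≤ n → (∫ ω, Z j ω) ≤ δ / (j : ℝ)) :
    ∀ β : ℝ, 0 < β →
      (ℙ {ω | β * Real.log n ≤ ∑ j ∈ Finset.Icc 2 n, Z j ω}).toReal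
          ≤ Real.exp (δ * ((∑ k ∈ Finset.Icc 1 n, (1 : ℝ) / k) - 1)
              - β * Real.log n * Real.log 2)
        ∧ Real.exp (δ * ((∑ k ∈ Finset.Icc 1 n, (1 : ℝ) / k) - 1)
              - β * Real.log n * Real.log 2)
          ≤ (n : ℝ) ^ (δ - β * Real.log 2) := by
  intro β _
  refine ⟨?_, ?_⟩
  · have h_chernoff := measure_sum_ge_le_of_iIndepFun_of_eq_zero_or_eq_one
      hindep (fun j => hmeas j) (fun j => h01 j) (log_nonneg one_le_two) (β * log n)
    have h_sum (ω : Ω) : ∑ j : Icc 2 n, Z j ω = ∑ j ∈ Icc 2 n, Z j ω := sum_coe_sort _ (Z · ω)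
    simp only [exp_log two_pos, h_sum, sum_coe_sort _ fun j => ∫ ω, Z j ω] at h_chernoff
    have h_mean : ∑ j ∈ Icc 2 n, ∫ ω, Z j ω ≤ δ * (∑ k ∈ Icc 1 n, (1 : ℝ) / k - 1) := by
      rw [← sum_Icc_two_one_div_eq (by omega), mul_sum]
      refine sum_le_sum fun j hj => ?_
      rw [mem_Icc] at hj; rw [mul_one_div]
      exact hE j hj.1 hj.2
    rw [← measureReal_def]
    refine h_chernoff.trans (exp_le_exp.2 ?_)
    linarith
  · rw [rpow_def_of_pos (by positivity), exp_le_exp]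
    nlinarith [sum_Icc_one_div_le_one_add_log n]
end

section
/- Let δ ≥ 1 be a real number and let n ≥ 2 be an integer. Let X_{i,j} (1 ≤ i < j ≤ n) be {0,1}-valued random variables on a probability space such that (i) E[X_{i,j}] ≤ δ/j for all 1 ≤ i < j ≤ n, and (ii) for every σ ∈ I(n), the family {X_{i,j} : (i,j) ∈ X(σ)} is mutually independent. For σ = (b_0, b_1, …, b_ℓ) ∈ I(n), let F_σ denote the event that X_{b_{i−1}, b_i} = 1 for every i ∈ {1,…,ℓ} (σ is then called feasible). Then there exist constants β_0 ≥ 1 and κ > 0, depending only on δ, such that for every real β ≥ β_0: Pr[there exists σ ∈ I(n) such that F_σ occurs and Σ_{(i,j) ∈ X(σ)} X_{i,j} ≥ β·ln n] ≤ n^{−κ·β}. -/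
open MeasureTheory
open scoped ProbabilityTheory BigOperators

/-- For a sequence `σ ∈ I(n)` given by `1 = b 0 < b 1 < ⋯ < b ℓ ≤ n`, the set
`X(σ)` of the `n − 1` index pairs
`{(b (i−1), j) : 1 ≤ i ≤ ℓ, b (i−1) < j ≤ b i} ∪ {(b ℓ, j) : b ℓ < j ≤ n}`. -/
def pathEvents (n ℓ : ℕ) (b : ℕ → ℕ) : Finset (ℕ × ℕ) :=
  ((Finset.range ℓ).biUnion fun i =>
      (Finset.Ioc (b i) (b (i + 1))).image fun j => (b i, j)) ∪
    ((Finset.Ioc (b ℓ) n).image fun j => (b ℓ, j))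

/-- `σ ∈ I(n)`: the sequence `b 0, b 1, …, b ℓ` is strictly increasing with
`b 0 = 1` and `b ℓ ≤ n`. -/
def isIndexSeq (n ℓ : ℕ) (b : ℕ → ℕ) : Prop :=
  b 0 = 1 ∧ (∀ i, i < ℓ → b i < b (i + 1)) ∧ b ℓ ≤ n

open Finset Real ProbabilityTheory

/-!
A path `σ` is determined by its jump set `T = {b 1, …, b ℓ} ⊆ (1, n]`, and `X(σ)` consists of the
pairs `(a j, j)`, `1 < j ≤ n`, where `a j` is the last vertex of `σ` below `j`. Feasibility forces
`X (a j) j = 1` for `j ∈ T`, so on the bad event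
`e^t ≤ e^{∑ X} = ∏_{j ∈ T} e X_{a j, j} * ∏_{j ∉ T} (1 + (e - 1) X_{a j, j})`, and Markov's
inequality with independence along `X(σ)` bounds its probability by
`e^{-t} ∏_{j ∈ T} eδ/j * ∏_{j ∉ T} (1 + (e - 1)δ/j)`. Summing over all `T` gives
`e^{-t} ∏_{1 < j ≤ n} (1 + (2e - 1)δ/j) ≤ e^{-t} n^{(2e-1)δ}`, which is at most `n^{-β/2}` for
`t = β ln n` and `β ≥ 4eδ`.
-/

section Chernoff

variable {ι : Type*} [DecidableEq ι]

/-- For `x ∈ {0,1}` with `x = 1` whenever `k ∈ F`, this is `exp x`; being affine in `x`, it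
commutes with expectation. -/
noncomputable def chernoffWeight (F : Finset ι) (k : ι) (x : ℝ) : ℝ :=
  if k ∈ F then exp 1 * x else 1 + (exp 1 - 1) * x

variable {F : Finset ι} {k : ι} {x : ℝ}

lemma measurable_chernoffWeight : Measurable (chernoffWeight F k) := by
  unfold chernoffWeight; split_ifs <;> fun_prop

lemma chernoffWeight_nonneg_le (hx : x = 0 ∨ x = 1) :
    0 ≤ chernoffWeight F k x ∧ chernoffWeight F k x ≤ exp 1 := by
  have : (1 : ℝ) ≤ exp 1 := one_le_exp zero_le_one
  unfold chernoffWeight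
  rcases hx with rfl | rfl <;> split_ifs <;> constructor <;> linarith

lemma exp_eq_chernoffWeight (hx : x = 0 ∨ x = 1) (hF : k ∈ F → x = 1) :
    exp x = chernoffWeight F k x := by
  unfold chernoffWeight
  rcases hx with rfl | rfl <;> split_ifs with hk <;> simp_all

lemma chernoffWeight_mono : Monotone (chernoffWeight F k) := by
  have : (1 : ℝ) ≤ exp 1 := one_le_exp zero_le_one
  intro x y hxy
  unfold chernoffWeight
  split_ifs <;> gcongr

lemma integral_chernoffWeight {Ω : Type*} {m : MeasurableSpace Ω} {μ : Measure Ω}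
    [IsProbabilityMeasure μ] {Z : Ω → ℝ} (hZ : Integrable Z μ) :
    ∫ ω, chernoffWeight F k (Z ω) ∂μ = chernoffWeight F k (∫ ω, Z ω ∂μ) := by
  unfold chernoffWeight
  split_ifs
  · exact integral_const_mul _ _
  · rw [integral_add (integrable_const 1) (hZ.const_mul _), integral_const_mul]
    simp

variable {Ω : Type*} {m : MeasurableSpace Ω} {μ : Measure Ω} [IsProbabilityMeasure μ]

lemma measureReal_forall_eq_one_and_le_sum_le (s : Finset ι) (hF : F ⊆ s)
    (Z : ι → Ω → ℝ) (hZm : ∀ k, Measurable (Z k)) (hZ01 : ∀ k ∈ s, ∀ ω, Z k ω = 0 ∨ Z k ω = 1)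
    (hind : iIndepFun (fun k : s => Z k) μ) (p : ι → ℝ) (hp : ∀ k ∈ s, ∫ ω, Z k ω ∂μ ≤ p k)
    (t : ℝ) :
    μ.real {ω | (∀ k ∈ F, Z k ω = 1) ∧ t ≤ ∑ k ∈ s, Z k ω}
      ≤ exp (-t) * ((∏ k ∈ F, exp 1 * p k) * ∏ k ∈ s \ F, (1 + (exp 1 - 1) * p k)) := by
  set G : Ω → ℝ := fun ω => ∏ k ∈ s, chernoffWeight F k (Z k ω)
  have hw := fun k (hk : k ∈ s) ω => chernoffWeight_nonneg_le (F := F) (k := k) (hZ01 k hk ω)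
  have hG_nonneg : ∀ ω, 0 ≤ G ω := fun ω => prod_nonneg fun k hk => (hw k hk ω).1
  have hG_int : Integrable G μ := by
    have hG_meas : Measurable G :=
      Finset.measurable_prod s fun k _ => measurable_chernoffWeight.comp (hZm k)
    refine Integrable.of_bound hG_meas.aestronglyMeasurable (exp 1 ^ #s) (ae_of_all _ fun ω => ?_)
    rw [Real.norm_of_nonneg (hG_nonneg ω), ← prod_const]
    exact prod_le_prod (fun k hk => (hw k hk ω).1) fun k hk => (hw k hk ω).2
  have hevent : {ω | (∀ k ∈ F, Z k ω = 1) ∧ t ≤ ∑ k ∈ s, Z k ω} ⊆ {ω | exp t ≤ G ω} := by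
    rintro ω ⟨hjump, hsum⟩
    calc exp t ≤ exp (∑ k ∈ s, Z k ω) := exp_le_exp.mpr hsum
      _ = G ω := by
        rw [exp_sum]
        exact prod_congr rfl fun k hk => exp_eq_chernoffWeight (hZ01 k hk ω) (hjump k)
  have hZ_int : ∀ k ∈ s, Integrable (Z k) μ := fun k hk =>
    Integrable.of_bound (hZm k).aestronglyMeasurable 1 (ae_of_all _ fun ω => by
      rcases hZ01 k hk ω with h | h <;> simp [h])
  have hG_integral : ∫ ω, G ω ∂μ = ∏ k ∈ s, ∫ ω, chernoffWeight F k (Z k ω) ∂μ := by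
    have := hind.integral_fun_prod_comp (f := fun k : s => chernoffWeight F k)
      (fun k => (hZm k).aemeasurable) (fun k => measurable_chernoffWeight.aestronglyMeasurable)
    rw [prod_coe_sort s (fun k => ∫ ω, chernoffWeight F k (Z k ω) ∂μ)] at this
    rw [← this]
    exact integral_congr_ae (ae_of_all _ fun ω => (prod_coe_sort s _).symm)
  have hsplit : ∏ k ∈ s, chernoffWeight F k (p k)
      = (∏ k ∈ F, exp 1 * p k) * ∏ k ∈ s \ F, (1 + (exp 1 - 1) * p k) := by
    simp only [chernoffWeight]
    rw [prod_ite, filter_mem_eq_inter, inter_eq_right.mpr hF, filter_notMem_eq_sdiff]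
  calc μ.real {ω | (∀ k ∈ F, Z k ω = 1) ∧ t ≤ ∑ k ∈ s, Z k ω}
      ≤ μ.real {ω | exp t ≤ G ω} := measureReal_mono hevent
    _ ≤ exp (-t) * ∫ ω, G ω ∂μ := by
      rw [exp_neg, ← div_eq_inv_mul, le_div_iff₀' (exp_pos t)]
      exact mul_meas_ge_le_integral_of_nonneg (ae_of_all _ hG_nonneg) hG_int _
    _ ≤ exp (-t) * ∏ k ∈ s, chernoffWeight F k (p k) := by
      rw [hG_integral]
      refine mul_le_mul_of_nonneg_left
        (prod_le_prod (fun k hk => ?_) fun k hk => ?_) (exp_pos _).le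
      · exact integral_nonneg fun ω => (hw k hk ω).1
      · rw [integral_chernoffWeight (hZ_int k hk)]
        exact chernoffWeight_mono (hp k hk)
    _ = _ := by rw [hsplit]

end Chernoff

def jumps (ℓ : ℕ) (b : ℕ → ℕ) : Finset ℕ := (Icc 1 ℓ).image b

def parent (T : Finset ℕ) (j : ℕ) : ℕ := ((insert 1 T).filter (· < j)).sup id

lemma one_le_parent (T : Finset ℕ) {j : ℕ} (hj : 1 < j) : 1 ≤ parent T j :=
  le_sup (f := id) (mem_filter.mpr ⟨mem_insert_self 1 T, hj⟩)

lemma parent_lt (T : Finset ℕ) {j : ℕ} (hj : 1 < j) : parent T j < j :=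
  (Finset.sup_lt_iff (by rw [Nat.bot_eq_zero]; omega)).mpr fun _ hi => (mem_filter.mp hi).2

namespace isIndexSeq

variable {n ℓ : ℕ} {b : ℕ → ℕ}

lemma strictMonoOn (hb : isIndexSeq n ℓ b) : StrictMonoOn b (Set.Iic ℓ) :=
  strictMonoOn_Iic_of_lt_succ fun i hi => hb.2.1 i hi

lemma one_lt_apply (hb : isIndexSeq n ℓ b) {i : ℕ} (hi : 1 ≤ i) (hiℓ : i ≤ ℓ) : 1 < b i :=
  hb.1 ▸ hb.strictMonoOn (Set.mem_Iic.mpr (Nat.zero_le ℓ)) (Set.mem_Iic.mpr hiℓ) hi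

lemma apply_le (hb : isIndexSeq n ℓ b) {i : ℕ} (hiℓ : i ≤ ℓ) : b i ≤ n :=
  (hb.strictMonoOn.monotoneOn (Set.mem_Iic.mpr hiℓ) (Set.mem_Iic.mpr le_rfl) hiℓ).trans hb.2.2

lemma jumps_subset (hb : isIndexSeq n ℓ b) : jumps ℓ b ⊆ Ioc 1 n := by
  intro j hj
  obtain ⟨i, hi, rfl⟩ := mem_image.mp hj
  rw [mem_Icc] at hi
  exact mem_Ioc.mpr ⟨hb.one_lt_apply hi.1 hi.2, hb.apply_le hi.2⟩

lemma insert_one_jumps (hb : isIndexSeq n ℓ b) :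
    insert 1 (jumps ℓ b) = (range (ℓ + 1)).image b := by
  ext x
  simp only [jumps, mem_insert, mem_image, mem_Icc, mem_range]
  constructor
  · rintro (rfl | ⟨i, hi, rfl⟩)
    exacts [⟨0, by omega, hb.1⟩, ⟨i, by omega, rfl⟩]
  · rintro ⟨_ | i, hi, rfl⟩
    exacts [Or.inl hb.1, Or.inr ⟨i + 1, by omega, rfl⟩]

lemma parent_eq (hb : isIndexSeq n ℓ b) {i j : ℕ} (hiℓ : i ≤ ℓ) (hij : b i < j)
    (hji : i < ℓ → j ≤ b (i + 1)) : parent (jumps ℓ b) j = b i := by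
  have hmono := hb.strictMonoOn
  refine le_antisymm (Finset.sup_le fun x hx => ?_) (le_sup (f := id) ?_)
  · rw [hb.insert_one_jumps, mem_filter, mem_image] at hx
    obtain ⟨⟨k, hk, rfl⟩, hkj⟩ := hx
    rw [mem_range] at hk
    refine hmono.monotoneOn (Set.mem_Iic.mpr (by omega)) (Set.mem_Iic.mpr hiℓ) ?_
    by_contra! hik
    have := hmono.monotoneOn (Set.mem_Iic.mpr (by omega)) (Set.mem_Iic.mpr (by omega))
      (show i + 1 ≤ k by omega)
    have := hji (by omega)
    omega
  · rw [hb.insert_one_jumps, mem_filter]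
    exact ⟨mem_image_of_mem b (mem_range.mpr (by omega)), hij⟩

lemma parent_apply (hb : isIndexSeq n ℓ b) {i : ℕ} (hi : 1 ≤ i) (hiℓ : i ≤ ℓ) :
    parent (jumps ℓ b) (b i) = b (i - 1) :=
  hb.parent_eq (by omega) (hb.2.1 (i - 1) (by omega) |>.trans_eq (by congr 1; omega))
    fun _ => le_of_eq (by congr 1; omega)

lemma pathEvents_eq_image (hb : isIndexSeq n ℓ b) :
    pathEvents n ℓ b = (Ioc 1 n).image fun j => (parent (jumps ℓ b) j, j) := by
  have hb0 : ∀ i ≤ ℓ, 1 ≤ b i := fun i hi => hb.1 ▸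
    hb.strictMonoOn.monotoneOn (Set.mem_Iic.mpr (Nat.zero_le ℓ)) (Set.mem_Iic.mpr hi)
      (Nat.zero_le i)
  ext ⟨x, j⟩
  simp only [pathEvents, mem_union, mem_biUnion, mem_range, mem_image, mem_Ioc, Prod.mk.injEq]
  constructor
  · rintro (⟨i, hi, j, ⟨hij, hji⟩, rfl, rfl⟩ | ⟨j, ⟨hℓj, hjn⟩, rfl, rfl⟩)
    · exact ⟨j, ⟨by linarith [hb0 i hi.le], hji.trans (hb.apply_le hi)⟩,
        hb.parent_eq hi.le hij fun _ => hji, rfl⟩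
    · exact ⟨j, ⟨by linarith [hb0 ℓ le_rfl], hjn⟩, hb.parent_eq le_rfl hℓj (by omega), rfl⟩
  · rintro ⟨j, ⟨h1j, hjn⟩, rfl, rfl⟩
    set i := Nat.findGreatest (fun i => b i < j) ℓ
    have hij : b i < j :=
      Nat.findGreatest_spec (P := fun i => b i < j) (Nat.zero_le ℓ) (hb.1 ▸ h1j)
    have hji : i < ℓ → j ≤ b (i + 1) := fun hi =>
      not_lt.mp (Nat.findGreatest_is_greatest (P := fun i => b i < j) (Nat.lt_succ_self i) hi)
    rw [hb.parent_eq (Nat.findGreatest_le ℓ) hij hji]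
    rcases (Nat.findGreatest_le ℓ : i ≤ ℓ).lt_or_eq with hi | hi
    · exact Or.inl ⟨i, hi, j, ⟨hij, hji hi⟩, rfl, rfl⟩
    · exact Or.inr ⟨j, ⟨hi ▸ hij, hjn⟩, by rw [hi], rfl⟩

lemma sum_pathEvents (hb : isIndexSeq n ℓ b) {M : Type*} [AddCommMonoid M] (f : ℕ × ℕ → M) :
    ∑ q ∈ pathEvents n ℓ b, f q = ∑ j ∈ Ioc 1 n, f (parent (jumps ℓ b) j, j) := by
  rw [hb.pathEvents_eq_image, sum_image fun _ _ _ _ h => (Prod.ext_iff.mp h).2]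

lemma forall_jumps_iff (hb : isIndexSeq n ℓ b) (P : ℕ → ℕ → Prop) :
    (∀ i, 1 ≤ i → i ≤ ℓ → P (b (i - 1)) (b i)) ↔ ∀ j ∈ jumps ℓ b, P (parent (jumps ℓ b) j) j := by
  change _ ↔ ∀ j ∈ (Icc 1 ℓ).image b, _
  simp only [forall_mem_image, mem_Icc]
  refine forall_congr' fun i => ⟨fun h hi => ?_, fun h hi hiℓ => ?_⟩
  · rw [hb.parent_apply hi.1 hi.2]; exact h hi.1 hi.2
  · rw [← hb.parent_apply hi hiℓ]; exact h ⟨hi, hiℓ⟩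

end isIndexSeq

section HeavyPath

variable {Ω : Type*} {m : MeasurableSpace Ω} {μ : Measure Ω} [IsProbabilityMeasure μ]

def heavyPathEvent (X : ℕ → ℕ → Ω → ℝ) (n : ℕ) (t : ℝ) (T : Finset ℕ) : Set Ω :=
  {ω | (∀ j ∈ T, X (parent T j) j ω = 1) ∧ t ≤ ∑ j ∈ Ioc 1 n, X (parent T j) j ω}

variable {n ℓ : ℕ} {b : ℕ → ℕ} (X : ℕ → ℕ → Ω → ℝ) (p : ℕ → ℝ)

lemma isIndexSeq.measureReal_heavyPathEvent_le (hb : isIndexSeq n ℓ b)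
    (hXm : ∀ i j, Measurable (X i j))
    (hX01 : ∀ i j ω, 1 ≤ i → i < j → j ≤ n → X i j ω = 0 ∨ X i j ω = 1)
    (hXmean : ∀ i j, 1 ≤ i → i < j → j ≤ n → ∫ ω, X i j ω ∂μ ≤ p j)
    (hind : iIndepFun (fun q : (pathEvents n ℓ b : Finset (ℕ × ℕ)) => X q.1.1 q.1.2) μ) (t : ℝ) :
    μ.real (heavyPathEvent X n t (jumps ℓ b)) ≤ exp (-t) *
      ((∏ j ∈ jumps ℓ b, exp 1 * p j) * ∏ j ∈ Ioc 1 n \ jumps ℓ b, (1 + (exp 1 - 1) * p j)) := by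
  set T := jumps ℓ b
  set g : ℕ → ℕ × ℕ := fun j => (parent T j, j)
  have hg : Function.Injective g := fun _ _ h => (Prod.ext_iff.mp h).2
  have hpairs : ∀ q ∈ pathEvents n ℓ b, 1 ≤ q.1 ∧ q.1 < q.2 ∧ q.2 ≤ n := by
    rw [hb.pathEvents_eq_image]
    rintro _ hq
    obtain ⟨j, hj, rfl⟩ := mem_image.mp hq
    rw [mem_Ioc] at hj
    exact ⟨one_le_parent T hj.1, parent_lt T hj.1, hj.2⟩
  have hF : T.image g ⊆ pathEvents n ℓ b :=
    hb.pathEvents_eq_image ▸ image_subset_image hb.jumps_subset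
  have := measureReal_forall_eq_one_and_le_sum_le (μ := μ) (pathEvents n ℓ b) hF
    (fun q => X q.1 q.2) (fun q => hXm q.1 q.2)
    (fun q hq ω => hX01 q.1 q.2 ω (hpairs q hq).1 (hpairs q hq).2.1 (hpairs q hq).2.2) hind
    (fun q => p q.2)
    (fun q hq => hXmean q.1 q.2 (hpairs q hq).1 (hpairs q hq).2.1 (hpairs q hq).2.2) t
  simp only [hb.sum_pathEvents, forall_mem_image] at this
  rwa [hb.pathEvents_eq_image, ← image_sdiff _ _ hg, prod_image hg.injOn,
    prod_image hg.injOn] at this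

lemma measureReal_exists_heavyPath_le
    (hXm : ∀ i j, Measurable (X i j))
    (hX01 : ∀ i j ω, 1 ≤ i → i < j → j ≤ n → X i j ω = 0 ∨ X i j ω = 1)
    (hXmean : ∀ i j, 1 ≤ i → i < j → j ≤ n → ∫ ω, X i j ω ∂μ ≤ p j)
    (hind : ∀ ℓ b, isIndexSeq n ℓ b →
      iIndepFun (fun q : (pathEvents n ℓ b : Finset (ℕ × ℕ)) => X q.1.1 q.1.2) μ) (t : ℝ) :
    μ.real {ω | ∃ (ℓ : ℕ) (b : ℕ → ℕ), isIndexSeq n ℓ b ∧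
        (∀ i, 1 ≤ i → i ≤ ℓ → X (b (i - 1)) (b i) ω = 1) ∧
        t ≤ ∑ q ∈ pathEvents n ℓ b, X q.1 q.2 ω}
      ≤ exp (-t) * ∏ j ∈ Ioc 1 n, (1 + (2 * exp 1 - 1) * p j) := by
  classical
  set S := (Ioc 1 n).powerset.filter fun T => ∃ ℓ b, isIndexSeq n ℓ b ∧ jumps ℓ b = T
  set B : Finset ℕ → ℝ := fun T =>
    exp (-t) * ((∏ j ∈ T, exp 1 * p j) * ∏ j ∈ Ioc 1 n \ T, (1 + (exp 1 - 1) * p j))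
  have hp : ∀ j ∈ Ioc 1 n, 0 ≤ p j := fun j hj => by
    rw [mem_Ioc] at hj
    refine (integral_nonneg fun ω => ?_).trans (hXmean 1 j le_rfl hj.1 hj.2)
    rcases hX01 1 j ω le_rfl hj.1 hj.2 with h | h <;> simp [h]
  have hB : ∀ T ∈ (Ioc 1 n).powerset, 0 ≤ B T := fun T hT => by
    have : (1 : ℝ) ≤ exp 1 := one_le_exp zero_le_one
    have hT := mem_powerset.mp hT
    refine mul_nonneg (exp_pos _).le (mul_nonneg (prod_nonneg fun j hj => ?_)
      (prod_nonneg fun j hj => ?_))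
    · exact mul_nonneg (exp_pos _).le (hp j (hT hj))
    · nlinarith [hp j (sdiff_subset hj)]
  have hcover : {ω | ∃ (ℓ : ℕ) (b : ℕ → ℕ), isIndexSeq n ℓ b ∧
      (∀ i, 1 ≤ i → i ≤ ℓ → X (b (i - 1)) (b i) ω = 1) ∧ t ≤ ∑ q ∈ pathEvents n ℓ b, X q.1 q.2 ω}
      ⊆ ⋃ T ∈ S, heavyPathEvent X n t T := by
    rintro ω ⟨ℓ, b, hb, hfeas, hsum⟩
    exact Set.mem_biUnion (mem_filter.mpr ⟨mem_powerset.mpr hb.jumps_subset, ℓ, b, hb, rfl⟩)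
      ⟨(hb.forall_jumps_iff fun i j => X i j ω = 1).mp hfeas,
        hb.sum_pathEvents (fun q => X q.1 q.2 ω) ▸ hsum⟩
  calc _ ≤ μ.real (⋃ T ∈ S, heavyPathEvent X n t T) :=
      measureReal_mono hcover (measure_ne_top _ _)
    _ ≤ ∑ T ∈ S, μ.real (heavyPathEvent X n t T) := measureReal_biUnion_finset_le _ _
    _ ≤ ∑ T ∈ S, B T := sum_le_sum fun T hT => by
      obtain ⟨-, ℓ, b, hb, rfl⟩ := mem_filter.mp hT
      exact hb.measureReal_heavyPathEvent_le X p hXm hX01 hXmean (hind ℓ b hb) t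
    _ ≤ ∑ T ∈ (Ioc 1 n).powerset, B T :=
      sum_le_sum_of_subset_of_nonneg (filter_subset _ _) fun T hT _ => hB T hT
    _ = exp (-t) * ∏ j ∈ Ioc 1 n, (1 + (2 * exp 1 - 1) * p j) := by
      rw [← mul_sum, ← prod_add]
      exact congrArg _ (prod_congr rfl fun j _ => by ring)

end HeavyPath

lemma sum_Ioc_inv_le_log (n : ℕ) : ∑ j ∈ Ioc 1 n, (j : ℝ)⁻¹ ≤ log n := by
  rcases Nat.eq_zero_or_pos n with rfl | hn
  · simp
  have h := harmonic_le_one_add_log n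
  rw [harmonic_eq_sum_Icc, Icc_eq_cons_Ioc hn, sum_cons] at h
  push_cast at h
  linarith

lemma prod_Ioc_one_add_div_le_rpow {c : ℝ} (hc : 0 ≤ c) {n : ℕ} (hn : 1 ≤ n) :
    ∏ j ∈ Ioc 1 n, (1 + c / j) ≤ (n : ℝ) ^ c := by
  calc ∏ j ∈ Ioc 1 n, (1 + c / j) ≤ ∏ j ∈ Ioc 1 n, exp (c / j) :=
        prod_le_prod (fun j _ => by positivity) fun j _ => by linarith [add_one_le_exp (c / j)]
    _ = exp (c * ∑ j ∈ Ioc 1 n, (j : ℝ)⁻¹) := by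
        rw [← exp_sum, mul_sum]; simp only [div_eq_mul_inv]
    _ ≤ exp (c * log n) := by gcongr; exact sum_Ioc_inv_le_log n
    _ = (n : ℝ) ^ c := by rw [rpow_def_of_pos (by exact_mod_cast hn), mul_comm]

/-- let `δ ≥ 1` be real. There exist constants `β₀ ≥ 1` and
`κ > 0`, depending only on `δ`, such that the following holds for every integer
`n ≥ 2`: if `X i j` (`1 ≤ i < j ≤ n`) are `{0,1}`-valued random variables on a
probability space with (i) `E[X i j] ≤ δ/j` for all `1 ≤ i < j ≤ n`, and
(ii) for every `σ ∈ I(n)` the family `{X i j : (i,j) ∈ X(σ)}` mutually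
independent, and `F σ` denotes the event that `X (b (i−1)) (b i) = 1` for every
`i ∈ {1,…,ℓ}` (`σ` is then called feasible), then for every real `β ≥ β₀`:
`Pr[∃ σ ∈ I(n), F σ occurs and ∑_{(i,j) ∈ X(σ)} X i j ≥ β·ln n] ≤ n^(−κ·β)`. -/
theorem stmt15 (δ : ℝ) (hδ : 1 ≤ δ) :
    ∃ β₀ κ : ℝ, 1 ≤ β₀ ∧ 0 < κ ∧
      ∀ (n : ℕ), 2 ≤ n →
      ∀ (Ω : Type) (_ : MeasureSpace Ω)
        (_ : IsProbabilityMeasure (ℙ : Measure Ω))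
        (X : ℕ → ℕ → Ω → ℝ),
        (∀ i j, Measurable (X i j)) →
        (∀ i j ω, 1 ≤ i → i < j → j ≤ n → X i j ω = 0 ∨ X i j ω = 1) →
        (∀ i j, 1 ≤ i → i < j → j ≤ n → (∫ ω, X i j ω) ≤ δ / (j : ℝ)) →
        (∀ ℓ (b : ℕ → ℕ), isIndexSeq n ℓ b →
          ProbabilityTheory.iIndepFun
            (fun p : (pathEvents n ℓ b : Finset (ℕ × ℕ)) => X p.1.1 p.1.2) ℙ) →
        ∀ β : ℝ, β₀ ≤ β →
          (ℙ {ω | ∃ (ℓ : ℕ) (b : ℕ → ℕ), isIndexSeq n ℓ b ∧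
                (∀ i, 1 ≤ i → i ≤ ℓ → X (b (i - 1)) (b i) ω = 1) ∧
                β * Real.log n ≤ ∑ p ∈ pathEvents n ℓ b, X p.1 p.2 ω}).toReal
            ≤ (n : ℝ) ^ (-(κ * β)) := by
  have he : (1 : ℝ) ≤ exp 1 := one_le_exp zero_le_one
  refine ⟨4 * exp 1 * δ, 1 / 2, by nlinarith, by norm_num, ?_⟩
  intro n hn Ω _ _ X hXm hX01 hXmean hind β hβ
  have hn1 : (1 : ℝ) ≤ n := by exact_mod_cast (by omega : 1 ≤ n)
  have hc : 0 ≤ (2 * exp 1 - 1) * δ := by nlinarith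
  calc _ ≤ exp (-(β * log n)) * ∏ j ∈ Ioc 1 n, (1 + (2 * exp 1 - 1) * (δ / j)) :=
        measureReal_exists_heavyPath_le X (fun j => δ / j) hXm hX01 hXmean hind _
    _ ≤ (n : ℝ) ^ (-β) * (n : ℝ) ^ ((2 * exp 1 - 1) * δ) := by
        rw [rpow_def_of_pos (by linarith), mul_neg, mul_comm (log n)]
        gcongr
        simpa only [mul_div_assoc] using prod_Ioc_one_add_div_le_rpow hc (by omega : 1 ≤ n)
    _ = (n : ℝ) ^ ((2 * exp 1 - 1) * δ - β) := by
        rw [← rpow_add (by linarith)]; ring_nf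
    _ ≤ (n : ℝ) ^ (-(1 / 2 * β)) := rpow_le_rpow_of_exponent_le hn1 (by linarith)
end
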